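/- arXiv:2206.10386 — 6 statements merged into one kernel-verified Lean document; each statement's English description precedes it below -/
import Mathlib

section
/- Let α : ZMod 5 → ℤ satisfy α(k) = Σ_{i ∈ ZMod 5} α(2i − k)·α(i) for every k ∈ ZMod 5, together with Σ_{i ∈ ZMod 5} α(i) = 1. Then there exists j ∈ ZMod 5 such that α(j) = 1 and α(i) = 0 for all i ≠ j. In other words, the only idempotents of the integral quandle ring ℤ[Q_5] with coefficient sum 1 are the basis elements x_j. -/
/-!
Write `A = ∑ α(i) xⁱ` in the group ring `ℤ[C₅]` and let `σ` be the automorphism `x ↦ x²`, so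
that `σ²` is the involution `x ↦ x⁻¹`. Since `xₐ ◃ x_b = x_{2b-a}`, idempotency of `α` in
`ℤ[Q₅]` says exactly `A = σ(A) · σ²(A)`. Because `σ⁴ = 1`, this relation, pushed around by `σ`,
forces the norm `N = A · σ²(A)` to be a `σ`-fixed idempotent. A `σ`-fixed element of `ℤ[C₅]` is
`p + u (x + x² + x³ + x⁴)`; with augmentation `p + 4u = (∑ α)² = 1` and `N² = N` this leaves
only `u = 0`, `p = 1`. Hence `∑ α(i)² = p = 1`, and an integer vector with square sum `1` and sum
`1` is a basis vector.
-/

open AddMonoidAlgebra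

theorem map_mul_map_map_eq_and_isIdempotentElem {M F : Type*} [CommMonoid M] [FunLike F M M]
    [MonoidHomClass F M M] (σ : F) (hσ : ∀ x, σ (σ (σ (σ x))) = x) {a : M}
    (ha : a = σ a * σ (σ a)) :
    σ (a * σ (σ a)) = a * σ (σ a) ∧ IsIdempotentElem (a * σ (σ a)) := by
  have hb : σ a = σ (σ a) * σ (σ (σ a)) := by simpa only [map_mul] using congrArg σ ha
  have hc : σ (σ a) = σ (σ (σ a)) * a := by simpa only [map_mul, hσ] using congrArg σ hb
  have hd : σ (σ (σ a)) = a * σ a := by simpa only [map_mul, hσ] using congrArg σ hc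
  rw [map_mul]
  clear hσ
  generalize σ (σ (σ a)) = d at *
  generalize σ (σ a) = c at *
  generalize σ a = b at *
  have hn : a * c = b * d * (a * c) := by
    calc a * c = (b * c) * (d * a) := by rw [← ha, ← hc]
      _ = _ := by ac_rfl
  have hbd : b * d = a * c * (b * d) := by
    calc b * d = (c * d) * (a * b) := by rw [← hb, ← hd]
      _ = _ := by ac_rfl
  have hfix : b * d = a * c := by rw [hbd, mul_comm, ← hn]
  exact ⟨hfix, by rw [IsIdempotentElem]; conv_rhs => rw [hn, hfix]⟩

section FiniteGroup

variable {R G : Type*} [Semiring R] [AddGroup G] [Fintype G]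

theorem AddMonoidAlgebra.coeff_mul_eq_sum (x y : R[G]) (g : G) :
    (x * y).coeff g = ∑ h, x.coeff h * y.coeff (-h + g) := by
  rw [coeff_mul_apply_left, Finsupp.sum_fintype _ _ (fun _ ↦ zero_mul _)]

theorem AddMonoidAlgebra.sum_coeff_mul (x y : R[G]) :
    ∑ g, (x * y).coeff g = (∑ g, x.coeff g) * ∑ g, y.coeff g := by
  simp_rw [coeff_mul_eq_sum, Finset.sum_mul, Finset.mul_sum]
  rw [Finset.sum_comm]
  refine Finset.sum_congr rfl fun h _ ↦ ?_
  exact Equiv.sum_comp (Equiv.addLeft (-h)) (fun g ↦ x.coeff h * y.coeff g)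

end FiniteGroup

theorem AddMonoidAlgebra.sum_coeff_domCongr {R A G : Type*} [CommSemiring R] [Semiring A]
    [Algebra R A] [AddMonoid G] [Fintype G] (e : G ≃+ G) (f : A[G]) :
    ∑ g, (domCongr R A e f).coeff g = ∑ g, f.coeff g := by
  simp_rw [coeff_domCongr]
  exact Equiv.sum_comp e.symm.toEquiv _

theorem Int.exists_eq_one_and_eq_zero_of_sum_sq_eq_one {ι : Type*} [Fintype ι] (α : ι → ℤ)
    (hsq : ∑ i, α i ^ 2 = 1) (hsum : ∑ i, α i = 1) :
    ∃ j, α j = 1 ∧ ∀ i, i ≠ j → α i = 0 := by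
  classical
  obtain ⟨j, hj⟩ : ∃ j, α j ≠ 0 := by
    by_contra! h
    simp [h] at hsum
  have hzero : ∀ i, i ≠ j → α i = 0 := by
    intro i hij
    have hle : α i ^ 2 + α j ^ 2 ≤ 1 := by
      rw [← hsq, ← Finset.sum_pair hij (f := fun k ↦ α k ^ 2)]
      exact Finset.sum_le_sum_of_subset_of_nonneg (Finset.subset_univ _)
        fun k _ _ ↦ sq_nonneg (α k)
    have hj1 : 1 ≤ α j ^ 2 := by nlinarith [Int.one_le_abs hj, sq_abs (α j)]
    nlinarith [sq_nonneg (α i)]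
  refine ⟨j, ?_, hzero⟩
  rwa [Finset.sum_eq_single j (fun i _ ↦ hzero i) (by simp)] at hsum

namespace ZMod5

def doubling : ZMod 5 ≃+ ZMod 5 where
  toFun i := 2 * i
  invFun i := 3 * i
  left_inv := by decide
  right_inv := by decide
  map_add' := mul_add 2

noncomputable def doublingAut : ℤ[ZMod 5] ≃ₐ[ℤ] ℤ[ZMod 5] := domCongr ℤ ℤ doubling

theorem coeff_doublingAut (f : ℤ[ZMod 5]) (j : ZMod 5) :
    (doublingAut f).coeff j = f.coeff (3 * j) :=
  coeff_domCongr doubling f j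

theorem doublingAut_four (f : ℤ[ZMod 5]) :
    doublingAut (doublingAut (doublingAut (doublingAut f))) = f := by
  ext j
  simp only [coeff_doublingAut]
  congr 1
  revert j
  decide

theorem coeff_doublingAut_mul_doublingAut (f : ℤ[ZMod 5]) (k : ZMod 5) :
    (doublingAut f * doublingAut (doublingAut f)).coeff k =
      ∑ i, f.coeff i * f.coeff (2 * i - k) := by
  rw [coeff_mul_eq_sum, ← doubling.toEquiv.sum_comp]
  refine Finset.sum_congr rfl fun i _ ↦ ?_
  simp only [coeff_doublingAut]
  congr 2 <;> revert i k <;> decide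

theorem coeff_mul_doublingAut_doublingAut_zero (f : ℤ[ZMod 5]) :
    (f * doublingAut (doublingAut f)).coeff 0 = ∑ i, f.coeff i ^ 2 := by
  rw [coeff_mul_eq_sum]
  refine Finset.sum_congr rfl fun i _ ↦ ?_
  simp only [coeff_doublingAut]
  rw [sq]
  congr 2
  revert i
  decide

theorem sum_univ_five {M : Type*} [AddCommMonoid M] (φ : ZMod 5 → M) :
    ∑ i, φ i = φ 0 + φ 1 + φ 2 + φ 3 + φ 4 :=
  Fin.sum_univ_five φ

theorem coeff_zero_eq_one_of_isIdempotentElem {f : ℤ[ZMod 5]} (hf : IsIdempotentElem f)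
    (hfix : doublingAut f = f) (hsum : ∑ i, f.coeff i = 1) : f.coeff 0 = 1 := by
  have hinv (j : ZMod 5) : f.coeff (3 * j) = f.coeff j := by
    rw [← coeff_doublingAut, hfix]
  have h3 : f.coeff 3 = f.coeff 1 := hinv 1
  have h4 : f.coeff 4 = f.coeff 1 := (hinv 3).trans h3
  have h2 : f.coeff 2 = f.coeff 1 := (hinv 4).trans h4
  have hsum' : f.coeff 0 + 4 * f.coeff 1 = 1 := by
    rw [← hsum, sum_univ_five, h2, h3, h4]
    ring
  have hsq : f.coeff 0 ^ 2 + 4 * f.coeff 1 ^ 2 = f.coeff 0 := by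
    conv_rhs => rw [← hf.eq, coeff_mul_eq_sum, sum_univ_five]
    rw [show (-0 + 0 : ZMod 5) = 0 from rfl, show (-1 + 0 : ZMod 5) = 4 from rfl,
      show (-2 + 0 : ZMod 5) = 3 from rfl, show (-3 + 0 : ZMod 5) = 2 from rfl,
      show (-4 + 0 : ZMod 5) = 1 from rfl, h2, h3, h4]
    ring
  have hu : 4 * (f.coeff 1 * (5 * f.coeff 1 - 1)) = 0 := by
    linear_combination hsq - (f.coeff 0 - 4 * f.coeff 1) * hsum'
  rcases mul_eq_zero.mp ((mul_eq_zero.mp hu).resolve_left four_ne_zero) with hu | hu <;> omega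

end ZMod5

open ZMod5

/-- The only idempotents of the integral quandle ring `ℤ[Q₅]` with coefficient sum 1
are the basis elements. -/
theorem stmt_1 (α : ZMod 5 → ℤ)
    (hidem : ∀ k : ZMod 5, α k = ∑ i : ZMod 5, α (2 * i - k) * α i)
    (hsum : ∑ i : ZMod 5, α i = 1) :
    ∃ j : ZMod 5, α j = 1 ∧ ∀ i : ZMod 5, i ≠ j → α i = 0 := by
  set A : ℤ[ZMod 5] := ofCoeff (Finsupp.equivFunOnFinite.symm α)
  have hA : A = doublingAut A * doublingAut (doublingAut A) := by
    ext k
    rw [coeff_doublingAut_mul_doublingAut]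
    simpa [A, mul_comm] using hidem k
  obtain ⟨hfix, hN⟩ := map_mul_map_map_eq_and_isIdempotentElem doublingAut doublingAut_four hA
  have hsumN : ∑ i, (A * doublingAut (doublingAut A)).coeff i = 1 := by
    rw [sum_coeff_mul, doublingAut, sum_coeff_domCongr, sum_coeff_domCongr]
    simp [A, hsum]
  have hsq := coeff_zero_eq_one_of_isIdempotentElem hN hfix hsumN
  rw [coeff_mul_doublingAut_doublingAut_zero] at hsq
  exact Int.exists_eq_one_and_eq_zero_of_sum_sq_eq_one α (by simpa [A] using hsq) hsum
end

section
/- Let n be an odd positive integer. There is no function α : ZMod n → ℤ with exactly two nonzero values (i.e., the set {i : α(i) ≠ 0} has cardinality 2) satisfying α(k) = Σ_{i ∈ ZMod n} α(2i − k)·α(i) for every k ∈ ZMod n. Equivalently, the integral quandle ring ℤ[Q_n] of the dihedral quandle of odd order n contains no idempotent of length 2. -/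
/-- For odd `n`, the integral quandle ring `ℤ[Qₙ]` of the dihedral quandle contains
no idempotent of length 2. -/
theorem stmt_2 (n : ℕ) [NeZero n] (hn : Odd n) :
    ¬ ∃ α : ZMod n → ℤ,
      (Finset.univ.filter (fun i : ZMod n => α i ≠ 0)).card = 2 ∧
      ∀ k : ZMod n, α k = ∑ i : ZMod n, α (2 * i - k) * α i := by
  rintro ⟨α, hcard, hidem⟩
  obtain ⟨a, b, hab, hs⟩ := Finset.card_eq_two.mp hcard
  have hmem : ∀ i : ZMod n, α i ≠ 0 ↔ i = a ∨ i = b := by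
    intro i
    constructor
    · intro h
      have : i ∈ ({a, b} : Finset (ZMod n)) := by
        rw [← hs]; simp [h]
      simpa using this
    · intro h
      have : i ∈ (Finset.univ.filter fun i : ZMod n => α i ≠ 0) := by
        rw [hs]; simpa using h
      simpa using this
  have ha0 : α a ≠ 0 := (hmem a).mpr (Or.inl rfl)
  have hb0 : α b ≠ 0 := (hmem b).mpr (Or.inr rfl)
  -- 2 is a unit in ZMod n since n is odd
  have h2 : IsUnit (2 : ZMod n) := by
    have hco : Nat.Coprime 2 n := by
      rw [Nat.prime_two.coprime_iff_not_dvd]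
      intro h
      exact (Nat.not_even_iff_odd.mpr hn) (even_iff_two_dvd.mpr h)
    have := (ZMod.isUnit_iff_coprime 2 n).mpr hco
    simpa using this
  have hcancel : ∀ x y : ZMod n, 2 * x = 2 * y → x = y := by
    intro x y h
    exact h2.mul_left_cancel h
  -- reduce the sum to two terms
  have hsum : ∀ k : ZMod n, α k = α (2 * a - k) * α a + α (2 * b - k) * α b := by
    intro k
    rw [hidem k]
    have hsub : ∑ i : ZMod n, α (2 * i - k) * α i
        = ∑ i ∈ ({a, b} : Finset (ZMod n)), α (2 * i - k) * α i := by
      refine (Finset.sum_subset (Finset.subset_univ _) ?_).symm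
      intro i _ hi
      have : α i = 0 := by
        by_contra h
        rcases (hmem i).mp h with h' | h' <;> simp [h'] at hi
      simp [this]
    rw [hsub, Finset.sum_pair hab]
  have hba : α (2 * b - a) = 0 := by
    by_contra h
    rcases (hmem _).mp h with h' | h'
    · apply hab.symm
      apply hcancel
      have : 2 * b = a + a := sub_eq_iff_eq_add.mp h'
      rw [this]; ring
    · apply hab.symm
      have : 2 * b = b + a := sub_eq_iff_eq_add.mp h'
      have hbb : b + b = b + a := by rw [← this]; ring
      exact add_left_cancel hbb
  have hab' : α (2 * a - b) = 0 := by
    by_contra h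
    rcases (hmem _).mp h with h' | h'
    · apply hab
      have : 2 * a = a + b := sub_eq_iff_eq_add.mp h'
      have haa : a + a = a + b := by rw [← this]; ring
      exact add_left_cancel haa
    · apply hab
      apply hcancel
      have : 2 * a = b + b := sub_eq_iff_eq_add.mp h'
      rw [this]; ring
  have ha1 : α a = 1 := by
    have h := hsum a
    have e1 : 2 * a - a = a := by ring
    rw [e1, hba] at h
    have h' : α a * (α a - 1) = 0 := by linear_combination -h
    rcases mul_eq_zero.mp h' with h'' | h''
    · exact absurd h'' ha0
    · linarith
  have hb1 : α b = 1 := by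
    have h := hsum b
    have e1 : 2 * b - b = b := by ring
    rw [e1, hab'] at h
    have h' : α b * (α b - 1) = 0 := by linear_combination -h
    rcases mul_eq_zero.mp h' with h'' | h''
    · exact absurd h'' hb0
    · linarith
  -- evaluate at k = 2b - a
  have h := hsum (2 * b - a)
  have e1 : 2 * b - (2 * b - a) = a := by ring
  rw [e1, hba, ha1, hb1] at h
  set d := 2 * a - (2 * b - a) with hd
  have hdval : α d = -1 := by linarith
  by_cases hdz : α d = 0
  · rw [hdz] at hdval; norm_num at hdval
  · rcases (hmem d).mp hdz with h' | h' <;> rw [h'] at hdval <;>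
      simp [ha1, hb1] at hdval
end

section
/- Let t : ZMod 5 → ℤ satisfy t(k) = Σ_{i ∈ ZMod 5} t(2i − k)·t(i) for every k ∈ ZMod 5, together with t(0) + t(1) + t(2) + t(3) + t(4) = 1. Then t(1)² = t(1), 5·t(4)² = 5·t(4) (hence t(4)² = t(4)), and t(4)³ = t(4)². -/
/-- Gröbner-basis relations for idempotents of `ℤ[Q₅]`:
`t(1)² = t(1)`, `5·t(4)² = 5·t(4)`, and `t(4)³ = t(4)²`. -/
theorem stmt_7 (t : ZMod 5 → ℤ)
    (hidem : ∀ k : ZMod 5, t k = ∑ i : ZMod 5, t (2 * i - k) * t i)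
    (hsum : t 0 + t 1 + t 2 + t 3 + t 4 = 1) :
    t 1 ^ 2 = t 1 ∧ 5 * t 4 ^ 2 = 5 * t 4 ∧ t 4 ^ 2 = t 4 ∧ t 4 ^ 3 = t 4 ^ 2 := by
  have h0 : t 0 = t 0 * t 0 + t 2 * t 1 + t 4 * t 2 + t 1 * t 3 + t 3 * t 4 :=
    (hidem 0).trans (Fin.sum_univ_five _)
  have h1 : t 1 = t 4 * t 0 + t 1 * t 1 + t 3 * t 2 + t 0 * t 3 + t 2 * t 4 :=
    (hidem 1).trans (Fin.sum_univ_five _)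
  have h2 : t 2 = t 3 * t 0 + t 0 * t 1 + t 2 * t 2 + t 4 * t 3 + t 1 * t 4 :=
    (hidem 2).trans (Fin.sum_univ_five _)
  have h3 : t 3 = t 2 * t 0 + t 4 * t 1 + t 1 * t 2 + t 3 * t 3 + t 0 * t 4 :=
    (hidem 3).trans (Fin.sum_univ_five _)
  have h4 : t 4 = t 1 * t 0 + t 3 * t 1 + t 0 * t 2 + t 2 * t 3 + t 4 * t 4 :=
    (hidem 4).trans (Fin.sum_univ_five _)
  have key1 : 5 * (t 1 ^ 2 - t 1 - t 4 ^ 2 + t 4) = 0 := by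
    linear_combination
      (t 4 + 3 * t 2 + 2 * t 1 - (1)) * h0 + (- t 4 - 2 * t 2 - t 0 - (2)) * h1 +
      (- t 4 + 2 * t 3) * h2 + (- t 4 - t 3 - 3 * t 2 - 4 * t 0 + (2)) * h3 +
      (2 * t 3 + t 1 - 2 * t 0 + (3)) * h4 +
      (2 * t 3 * t 4 - t 3 ^ 2 - t 1 * t 4 + 3 * t 1 * t 3 - 4 * t 0 * t 4 - t 0 * t 3
        - 3 * t 0 * t 2 - 2 * t 4 + 2 * t 3 + 3 * t 1 - t 0) * hsum
  have key2 : 5 * (5 * t 4 ^ 3 - 6 * t 4 ^ 2 + t 4) = 0 := by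
    linear_combination
      (- 15 * t 4 ^ 2 - 15 * t 3 * t 4 - 20 * t 2 * t 4 - 10 * t 1 * t 4 + 10 * t 1 * t 3
        + 20 * t 0 * t 4 + 20 * t 0 * t 3 + 14 * t 4 - 5 * t 3 + 2 * t 1 + 4 * t 0 - (1)) * h0 +
      (15 * t 4 ^ 2 + 20 * t 2 * t 4 + 20 * t 1 * t 4 + 10 * t 1 * t 3 + 25 * t 0 * t 4
        + 10 * t 0 * t 3 - 10 * t 0 ^ 2 - 14 * t 4 - 2 * t 3 + 6 * t 1 + 15 * t 0 - (3)) * h1 +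
      (- 20 * t 3 * t 4 + 10 * t 1 * t 4 + 20 * t 1 * t 3 + 25 * t 0 * t 4 + 20 * t 0 * t 3
        + 10 * t 0 * t 1 - 2 * t 4 - 4 * t 3 + t 0) * h2 +
      (30 * t 4 ^ 2 + 15 * t 3 * t 4 + 20 * t 2 * t 4 + 20 * t 1 * t 4 + 20 * t 1 * t 3
        + 50 * t 0 * t 4 + 10 * t 0 * t 3 + 10 * t 0 * t 1 - 10 * t 0 ^ 2 - 30 * t 4 - t 3
        + 4 * t 1 + 12 * t 0 - (2)) * h3 +
      (- 5 * t 3 * t 4 - 5 * t 1 * t 4 + 20 * t 1 * t 3 - 10 * t 1 * t 2 + 15 * t 0 * t 4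
        + 10 * t 0 * t 3 - 10 * t 0 * t 2 - 21 * t 4 - t 3 + 2 * t 2 + 5 * t 1 + 5 * t 0 - (1)) * h4 +
      (- 20 * t 3 * t 4 ^ 2 + 15 * t 3 ^ 2 * t 4 + 25 * t 1 * t 4 ^ 2 - 5 * t 1 * t 3 * t 4
        + 20 * t 1 * t 3 ^ 2 + 10 * t 1 * t 2 * t 4 + 10 * t 1 * t 2 * t 3 + 20 * t 1 ^ 2 * t 4
        + 10 * t 1 ^ 2 * t 3 + 60 * t 0 * t 4 ^ 2 + 45 * t 0 * t 3 * t 4 + 10 * t 0 * t 3 ^ 2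
        + 45 * t 0 * t 2 * t 4 + 10 * t 0 * t 2 * t 3 + 30 * t 0 * t 1 * t 4 + 40 * t 0 * t 1 * t 3
        + 10 * t 0 ^ 2 * t 3 - 10 * t 0 ^ 2 * t 2 + 4 * t 4 ^ 2 - 38 * t 3 * t 4 - t 3 ^ 2
        - 2 * t 2 * t 4 - 2 * t 2 * t 3 - 16 * t 1 * t 4 - t 1 * t 3 + 6 * t 1 ^ 2 + 17 * t 0 * t 4
        + 7 * t 0 * t 3 + 3 * t 0 * t 2 + 14 * t 0 * t 1 + 4 * t 0 ^ 2 - 6 * t 4 - 2 * t 3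
        - 3 * t 1 - t 0) * hsum
  have hfac : t 4 * (t 4 - 1) * (5 * t 4 - 1) = 0 := by linarith [key2, sq_nonneg (t 4)]
  have he : t 4 ^ 2 = t 4 := by
    rcases mul_eq_zero.1 hfac with h | h
    · rcases mul_eq_zero.1 h with h | h
      · rw [h]; ring
      · have : t 4 = 1 := by omega
        rw [this]; ring
    · omega
  have hb : t 1 ^ 2 = t 1 := by linarith [key1, he]
  refine ⟨hb, ?_, he, ?_⟩
  · linear_combination 5 * he
  · linear_combination t 4 * he
end

section
/- Let t : ZMod 5 → ℤ satisfy t(k) = Σ_{i ∈ ZMod 5} t(2i − k)·t(i) for every k ∈ ZMod 5, together with t(0) + t(1) + t(2) + t(3) + t(4) = 1. Then t(2)·t(3) = 0, t(2)·t(4) = 0, and t(3)·t(4) = 0. -/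
/-- Gröbner-basis relations for idempotents of `ℤ[Q₅]`:
`t(2)·t(3) = 0`, `t(2)·t(4) = 0`, `t(3)·t(4) = 0`. -/
theorem stmt_8 (t : ZMod 5 → ℤ)
    (hidem : ∀ k : ZMod 5, t k = ∑ i : ZMod 5, t (2 * i - k) * t i)
    (hsum : t 0 + t 1 + t 2 + t 3 + t 4 = 1) :
    t 2 * t 3 = 0 ∧ t 2 * t 4 = 0 ∧ t 3 * t 4 = 0 := by
  have expand : ∀ f : ZMod 5 → ℤ, (∑ i : ZMod 5, f i) = f 0 + f 1 + f 2 + f 3 + f 4 := by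
    intro f
    have h : (Finset.univ : Finset (ZMod 5)) = {0, 1, 2, 3, 4} := by decide
    rw [h, Finset.sum_insert (by decide), Finset.sum_insert (by decide),
      Finset.sum_insert (by decide), Finset.sum_insert (by decide), Finset.sum_singleton]
    ring
  have h0 : t 0 = t 0 * t 0 + t 2 * t 1 + t 4 * t 2 + t 1 * t 3 + t 3 * t 4 := by
    have h := hidem 0
    rw [expand] at h
    simpa only [show (2*(0:ZMod 5) - 0) = 0 by decide ,show (2*(1:ZMod 5) - 0) = 2 by decide ,show (2*(2:ZMod 5) - 0) = 4 by decide ,show (2*(3:ZMod 5) - 0) = 1 by decide ,show (2*(4:ZMod 5) - 0) = 3 by decide] using h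
  have h1 : t 1 = t 4 * t 0 + t 1 * t 1 + t 3 * t 2 + t 0 * t 3 + t 2 * t 4 := by
    have h := hidem 1
    rw [expand] at h
    simpa only [show (2*(0:ZMod 5) - 1) = 4 by decide ,show (2*(1:ZMod 5) - 1) = 1 by decide ,show (2*(2:ZMod 5) - 1) = 3 by decide ,show (2*(3:ZMod 5) - 1) = 0 by decide ,show (2*(4:ZMod 5) - 1) = 2 by decide] using h
  have h2 : t 2 = t 3 * t 0 + t 0 * t 1 + t 2 * t 2 + t 4 * t 3 + t 1 * t 4 := by
    have h := hidem 2
    rw [expand] at h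
    simpa only [show (2*(0:ZMod 5) - 2) = 3 by decide ,show (2*(1:ZMod 5) - 2) = 0 by decide ,show (2*(2:ZMod 5) - 2) = 2 by decide ,show (2*(3:ZMod 5) - 2) = 4 by decide ,show (2*(4:ZMod 5) - 2) = 1 by decide] using h
  have h3 : t 3 = t 2 * t 0 + t 4 * t 1 + t 1 * t 2 + t 3 * t 3 + t 0 * t 4 := by
    have h := hidem 3
    rw [expand] at h
    simpa only [show (2*(0:ZMod 5) - 3) = 2 by decide ,show (2*(1:ZMod 5) - 3) = 4 by decide ,show (2*(2:ZMod 5) - 3) = 1 by decide ,show (2*(3:ZMod 5) - 3) = 3 by decide ,show (2*(4:ZMod 5) - 3) = 0 by decide] using h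
  have h4 : t 4 = t 1 * t 0 + t 3 * t 1 + t 0 * t 2 + t 2 * t 3 + t 4 * t 4 := by
    have h := hidem 4
    rw [expand] at h
    simpa only [show (2*(0:ZMod 5) - 4) = 1 by decide ,show (2*(1:ZMod 5) - 4) = 3 by decide ,show (2*(2:ZMod 5) - 4) = 0 by decide ,show (2*(3:ZMod 5) - 4) = 2 by decide ,show (2*(4:ZMod 5) - 4) = 4 by decide] using h
  have hq : (5 * (t 0 * t 0 + t 1 * t 1 + t 2 * t 2 + t 3 * t 3 + t 4 * t 4) - 1) *
      ((t 0 * t 0 + t 1 * t 1 + t 2 * t 2 + t 3 * t 3 + t 4 * t 4) - 1) = 0 := by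
    linear_combination ((-5) + (4)*(t 4) + (59)*(t 3) + (-10)*(t 3)*(t 4) + (-55)*(t 3)*(t 3) + (-45)*(t 2) + (15)*(t 2)*(t 4) + (6)*(t 2)*(t 3) + (28)*(t 2)*(t 2) + (-21)*(t 2)*(t 2)*(t 3) + (21)*(t 2)*(t 2)*(t 2) + (46)*(t 1) + (-39)*(t 1)*(t 4) + (60)*(t 1)*(t 3) + (-38)*(t 1)*(t 3)*(t 3) + (-146)*(t 1)*(t 2) + (-44)*(t 1)*(t 2)*(t 3) + (42)*(t 1)*(t 2)*(t 2) + (41)*(t 1)*(t 1) + (43)*(t 1)*(t 1)*(t 4) + (-2)*(t 1)*(t 1)*(t 3) + (-38)*(t 1)*(t 1)*(t 2) + (-83)*(t 1)*(t 1)*(t 1) + (5)*(t 0) + (-73)*(t 0)*(t 4) + (42)*(t 0)*(t 4)*(t 4) + (12)*(t 0)*(t 3) + (-2)*(t 0)*(t 3)*(t 4) + (-44)*(t 0)*(t 3)*(t 3) + (-71)*(t 0)*(t 2) + (44)*(t 0)*(t 2)*(t 4) + (4)*(t 0)*(t 2)*(t 3) + (92)*(t 0)*(t 1) + (-164)*(t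 0)*(t 1)*(t 4) + (-82)*(t 0)*(t 1)*(t 3) + (-40)*(t 0)*(t 1)*(t 2) + (42)*(t 0)*(t 1)*(t 1) + (-5)*(t 0)*(t 0) + (-40)*(t 0)*(t 0)*(t 4) + (-19)*(t 0)*(t 0)*(t 3) + (-21)*(t 0)*(t 0)*(t 2)) * h0 + ((1) + (-2)*(t 4) + (-2)*(t 3) + (47)*(t 2) + (-25)*(t 2)*(t 4) + (-4)*(t 2)*(t 3) + (-28)*(t 2)*(t 2) + (-21)*(t 2)*(t 2)*(t 2) + (-5)*(t 1) + (-9)*(t 1)*(t 4) + (50)*(t 1)*(t 3) + (83)*(t 1)*(t 2) + (40)*(t 1)*(t 2)*(t 4) + (-38)*(t 1)*(t 2)*(t 3) + (-42)*(t 1)*(t 2)*(t 2) + (-5)*(t 1)*(t 1) + (-43)*(t 1)*(t 1)*(t 4) + (43)*(t 1)*(t 1)*(t 3) + (81)*(t 1)*(t 1)*(t 2) + (-38)*(t 0) + (61)*(t 0)*(t 4) + (-42)*(t 0)*(t 4)*(t 4) + (-55)*(t 0)*(t 3) + (69)*(t 0)*(t 2) + (38)*(t 0)*(t 2)*(t 4)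 + (-42)*(t 0)*(t 2)*(t 3) + (21)*(t 0)*(t 2)*(t 2) + (-126)*(t 0)*(t 1) + (-44)*(t 0)*(t 1)*(t 3) + (-2)*(t 0)*(t 1)*(t 2) + (-81)*(t 0)*(t 1)*(t 1) + (1)*(t 0)*(t 0) + (-38)*(t 0)*(t 0)*(t 3) + (-81)*(t 0)*(t 0)*(t 2) + (2)*(t 0)*(t 0)*(t 1) + (39)*(t 0)*(t 0)*(t 0)) * h1 + ((1) + (-2)*(t 4) + (-57)*(t 3) + (55)*(t 3)*(t 3) + (-5)*(t 2) + (49)*(t 2)*(t 3) + (-5)*(t 2)*(t 2) + (21)*(t 2)*(t 2)*(t 3) + (-51)*(t 1) + (74)*(t 1)*(t 4) + (-62)*(t 1)*(t 3) + (38)*(t 1)*(t 3)*(t 3) + (-9)*(t 1)*(t 2) + (82)*(t 1)*(t 2)*(t 3) + (-21)*(t 1)*(t 2)*(t 2) + (8)*(t 1)*(t 1) + (-43)*(t 1)*(t 1)*(t 4) + (-39)*(t 1)*(t 1)*(t 3) + (-42)*(t 1)*(t 1)*(t 2) + (41)*(t 1)*(t 1)*(t 1) + (53)*(t 0) + (51)*(t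 0)*(t 4) + (-42)*(t 0)*(t 4)*(t 4) + (-40)*(t 0)*(t 3) + (44)*(t 0)*(t 3)*(t 3) + (82)*(t 0)*(t 2) + (40)*(t 0)*(t 2)*(t 3) + (26)*(t 0)*(t 1) + (42)*(t 0)*(t 1)*(t 4) + (42)*(t 0)*(t 1)*(t 2) + (81)*(t 0)*(t 1)*(t 1) + (-31)*(t 0)*(t 0) + (104)*(t 0)*(t 0)*(t 4) + (81)*(t 0)*(t 0)*(t 3) + (42)*(t 0)*(t 0)*(t 2) + (-41)*(t 0)*(t 0)*(t 1) + (-20)*(t 0)*(t 0)*(t 0)) * h2 + ((1) + (-2)*(t 4) + (-5)*(t 3) + (-5)*(t 3)*(t 3) + (59)*(t 2) + (-61)*(t 2)*(t 2) + (-2)*(t 1) + (-38)*(t 1)*(t 4) + (55)*(t 1)*(t 3) + (72)*(t 1)*(t 2) + (21)*(t 1)*(t 2)*(t 2) + (-2)*(t 1)*(t 1) + (3)*(t 1)*(t 1)*(t 4) + (38)*(t 1)*(t 1)*(t 3) + (39)*(t 1)*(t 1)*(t 2) + (2)*(t 1)*(t 1)*(t 1) + (-51)*(t 0) + (33)*(t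 0)*(t 4) + (2)*(t 0)*(t 4)*(t 4) + (-55)*(t 0)*(t 3) + (35)*(t 0)*(t 2) + (-23)*(t 0)*(t 2)*(t 2) + (-111)*(t 0)*(t 1) + (40)*(t 0)*(t 1)*(t 4) + (6)*(t 0)*(t 1)*(t 3) + (-40)*(t 0)*(t 1)*(t 2) + (-40)*(t 0)*(t 1)*(t 1) + (52)*(t 0)*(t 0) + (-62)*(t 0)*(t 0)*(t 4) + (-44)*(t 0)*(t 0)*(t 3) + (20)*(t 0)*(t 0)*(t 2) + (37)*(t 0)*(t 0)*(t 1) + (1)*(t 0)*(t 0)*(t 0)) * h3 + ((1) + (-5)*(t 4) + (-5)*(t 4)*(t 4) + (-2)*(t 3) + (-2)*(t 2) + (4)*(t 1) + (-30)*(t 1)*(t 3) + (48)*(t 1)*(t 2) + (-40)*(t 1)*(t 2)*(t 2) + (-46)*(t 1)*(t 1) + (40)*(t 1)*(t 1)*(t 1) + (4)*(t 0) + (24)*(t 0)*(t 3) + (-40)*(t 0)*(t 2)*(t 2) + (-34)*(t 0)*(t 1) + (40)*(t 0)*(t 1)*(t 4) + (80)*(t 0)*(t 1)*(t 3) + (80)*(t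 0)*(t 1)*(t 2) + (-22)*(t 0)*(t 0) + (40)*(t 0)*(t 0)*(t 4) + (20)*(t 0)*(t 0)*(t 3) + (-40)*(t 0)*(t 0)*(t 1) + (20)*(t 0)*(t 0)*(t 0)) * h4 + ((-1) + (-6)*(t 0) + (10)*(t 0)*(t 0)) * hsum
  have hs1 : t 0 * t 0 + t 1 * t 1 + t 2 * t 2 + t 3 * t 3 + t 4 * t 4 = 1 := by
    rcases mul_eq_zero.mp hq with h | h
    · omega
    · omega
  have hself : ∀ x : ℤ, x ≤ x * x := by
    intro x
    rcases le_or_gt x 0 with h | h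
    · exact h.trans (mul_self_nonneg x)
    · nlinarith
  have hz0 : t 0 * t 0 - t 0 = 0 := by linarith [hself (t 0), hself (t 1), hself (t 2), hself (t 3), hself (t 4)]
  have hz1 : t 1 * t 1 - t 1 = 0 := by linarith [hself (t 0), hself (t 1), hself (t 2), hself (t 3), hself (t 4)]
  have hz2 : t 2 * t 2 - t 2 = 0 := by linarith [hself (t 0), hself (t 1), hself (t 2), hself (t 3), hself (t 4)]
  have hz3 : t 3 * t 3 - t 3 = 0 := by linarith [hself (t 0), hself (t 1), hself (t 2), hself (t 3), hself (t 4)]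
  have hz4 : t 4 * t 4 - t 4 = 0 := by linarith [hself (t 0), hself (t 1), hself (t 2), hself (t 3), hself (t 4)]
  have b0 : t 0 = 0 ∨ t 0 = 1 := by
    rcases mul_eq_zero.mp (show t 0 * (t 0 - 1) = 0 by linarith [hz0, mul_comm (t 0) (t 0)]) with h | h
    · exact Or.inl h
    · exact Or.inr (by linarith)
  have b1 : t 1 = 0 ∨ t 1 = 1 := by
    rcases mul_eq_zero.mp (show t 1 * (t 1 - 1) = 0 by linarith [hz1, mul_comm (t 1) (t 1)]) with h | h
    · exact Or.inl h
    · exact Or.inr (by linarith)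
  have b2 : t 2 = 0 ∨ t 2 = 1 := by
    rcases mul_eq_zero.mp (show t 2 * (t 2 - 1) = 0 by linarith [hz2, mul_comm (t 2) (t 2)]) with h | h
    · exact Or.inl h
    · exact Or.inr (by linarith)
  have b3 : t 3 = 0 ∨ t 3 = 1 := by
    rcases mul_eq_zero.mp (show t 3 * (t 3 - 1) = 0 by linarith [hz3, mul_comm (t 3) (t 3)]) with h | h
    · exact Or.inl h
    · exact Or.inr (by linarith)
  have b4 : t 4 = 0 ∨ t 4 = 1 := by
    rcases mul_eq_zero.mp (show t 4 * (t 4 - 1) = 0 by linarith [hz4, mul_comm (t 4) (t 4)]) with h | h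
    · exact Or.inl h
    · exact Or.inr (by linarith)
  have nn0 : 0 ≤ t 0 := by rcases b0 with h | h <;> omega
  have nn1 : 0 ≤ t 1 := by rcases b1 with h | h <;> omega
  have nn2 : 0 ≤ t 2 := by rcases b2 with h | h <;> omega
  have nn3 : 0 ≤ t 3 := by rcases b3 with h | h <;> omega
  have nn4 : 0 ≤ t 4 := by rcases b4 with h | h <;> omega
  refine ⟨?_, ?_, ?_⟩
  · rcases b2 with h | h
    · rw [h]; ring
    · rcases b3 with h' | h'
      · rw [h']; ring
      · exfalso; have := nn0; have := nn1; have := nn4; omega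
  · rcases b2 with h | h
    · rw [h]; ring
    · rcases b4 with h' | h'
      · rw [h']; ring
      · exfalso; have := nn0; have := nn1; have := nn3; omega
  · rcases b3 with h | h
    · rw [h]; ring
    · rcases b4 with h' | h'
      · rw [h']; ring
      · exfalso; have := nn0; have := nn1; have := nn2; omega
end

section
/- Let t : ZMod 5 → ℤ satisfy t(k) = Σ_{i ∈ ZMod 5} t(2i − k)·t(i) for every k ∈ ZMod 5, together with t(0) + t(1) + t(2) + t(3) + t(4) = 1. Then t(2)² = 3·t(4)² + t(2) − 3·t(4) and t(3)² = 4·t(2)² + t(3) − 4·t(2). -/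
/-- Gröbner-basis relations for idempotents of `ℤ[Q₅]`:
`t(2)² = 3·t(4)² + t(2) − 3·t(4)` and `t(3)² = 4·t(2)² + t(3) − 4·t(2)`. -/
theorem stmt_10 (t : ZMod 5 → ℤ)
    (hidem : ∀ k : ZMod 5, t k = ∑ i : ZMod 5, t (2 * i - k) * t i)
    (hsum : t 0 + t 1 + t 2 + t 3 + t 4 = 1) :
    t 2 ^ 2 = 3 * t 4 ^ 2 + t 2 - 3 * t 4 ∧
    t 3 ^ 2 = 4 * t 2 ^ 2 + t 3 - 4 * t 2 := by
  have huniv : (Finset.univ : Finset (ZMod 5)) = {0,1,2,3,4} := by decide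
  have h0 : t 0 = t 0 * t 0 + t 2 * t 1 + t 4 * t 2 + t 1 * t 3 + t 3 * t 4 := by
    have h := hidem 0
    rw [huniv, Finset.sum_insert (by decide), Finset.sum_insert (by decide),
        Finset.sum_insert (by decide), Finset.sum_insert (by decide),
        Finset.sum_singleton] at h
    norm_num at h
    simp only [show ((-1:ZMod 5))=4 by decide, show ((-2:ZMod 5))=3 by decide,
        show ((-3:ZMod 5))=2 by decide, show ((-4:ZMod 5))=1 by decide,
        show ((5:ZMod 5))=0 by decide, show ((6:ZMod 5))=1 by decide,
        show ((7:ZMod 5))=2 by decide, show ((8:ZMod 5))=3 by decide] at h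
    linear_combination h
  have h1 : t 1 = t 4 * t 0 + t 1 * t 1 + t 3 * t 2 + t 0 * t 3 + t 2 * t 4 := by
    have h := hidem 1
    rw [huniv, Finset.sum_insert (by decide), Finset.sum_insert (by decide),
        Finset.sum_insert (by decide), Finset.sum_insert (by decide),
        Finset.sum_singleton] at h
    norm_num at h
    simp only [show ((-1:ZMod 5))=4 by decide, show ((-2:ZMod 5))=3 by decide,
        show ((-3:ZMod 5))=2 by decide, show ((-4:ZMod 5))=1 by decide,
        show ((5:ZMod 5))=0 by decide, show ((6:ZMod 5))=1 by decide,
        show ((7:ZMod 5))=2 by decide, show ((8:ZMod 5))=3 by decide] at h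
    linear_combination h
  have h2 : t 2 = t 3 * t 0 + t 0 * t 1 + t 2 * t 2 + t 4 * t 3 + t 1 * t 4 := by
    have h := hidem 2
    rw [huniv, Finset.sum_insert (by decide), Finset.sum_insert (by decide),
        Finset.sum_insert (by decide), Finset.sum_insert (by decide),
        Finset.sum_singleton] at h
    norm_num at h
    simp only [show ((-1:ZMod 5))=4 by decide, show ((-2:ZMod 5))=3 by decide,
        show ((-3:ZMod 5))=2 by decide, show ((-4:ZMod 5))=1 by decide,
        show ((5:ZMod 5))=0 by decide, show ((6:ZMod 5))=1 by decide,
        show ((7:ZMod 5))=2 by decide, show ((8:ZMod 5))=3 by decide] at h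
    linear_combination h
  have h3 : t 3 = t 2 * t 0 + t 4 * t 1 + t 1 * t 2 + t 3 * t 3 + t 0 * t 4 := by
    have h := hidem 3
    rw [huniv, Finset.sum_insert (by decide), Finset.sum_insert (by decide),
        Finset.sum_insert (by decide), Finset.sum_insert (by decide),
        Finset.sum_singleton] at h
    norm_num at h
    simp only [show ((-1:ZMod 5))=4 by decide, show ((-2:ZMod 5))=3 by decide,
        show ((-3:ZMod 5))=2 by decide, show ((-4:ZMod 5))=1 by decide,
        show ((5:ZMod 5))=0 by decide, show ((6:ZMod 5))=1 by decide,
        show ((7:ZMod 5))=2 by decide, show ((8:ZMod 5))=3 by decide] at h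
    linear_combination h
  have h4 : t 4 = t 1 * t 0 + t 3 * t 1 + t 0 * t 2 + t 2 * t 3 + t 4 * t 4 := by
    have h := hidem 4
    rw [huniv, Finset.sum_insert (by decide), Finset.sum_insert (by decide),
        Finset.sum_insert (by decide), Finset.sum_insert (by decide),
        Finset.sum_singleton] at h
    norm_num at h
    simp only [show ((-1:ZMod 5))=4 by decide, show ((-2:ZMod 5))=3 by decide,
        show ((-3:ZMod 5))=2 by decide, show ((-4:ZMod 5))=1 by decide,
        show ((5:ZMod 5))=0 by decide, show ((6:ZMod 5))=1 by decide,
        show ((7:ZMod 5))=2 by decide, show ((8:ZMod 5))=3 by decide] at h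
    linear_combination h
  have key5 : 5*((t 4^2 - t 4) * (25*(t 4^2 - t 4) + 4)) = 0 := by
    linear_combination (4 + 24*(t 4) + -28*(t 4)^2 + -24*(t 3) + -12*(t 3)*(t 4) + 16*(t 3)^2 + 9*(t 2) + -113*(t 2)*(t 4) + 100*(t 2)*(t 4)^2 + 72*(t 2)*(t 3) + -100*(t 2)*(t 3)*(t 4) + -5*(t 2)^2 + 25*(t 2)^2*(t 4) + -37*(t 1) + -39*(t 1)*(t 4) + 100*(t 1)*(t 4)^2 + 88*(t 1)*(t 3) + -100*(t 1)*(t 3)*(t 4) + 36*(t 1)*(t 2) + 25*(t 1)^2 + -25*(t 1)^2*(t 4)) * h1 + (8 + 38*(t 4) + -96*(t 4)^2 + 50*(t 4)^3 + -8*(t 3) + 36*(t 3)*(t 4) + -8*(t 3)^2 + -2*(t 2) + -91*(t 2)*(t 4) + 125*(t 2)*(t 4)^2 + -16*(t 2)*(t 3) + -10*(t 2)^2 + 50*(t 2)^2*(t 4) + -54*(t 1) + 7*(t 1)*(t 4) + 75*(t 1)*(t 4)^2 + -24*(t 1)*(t 3) + 32*(t 1)*(t 2) + 50*(t 1)^2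 + -50*(t 1)^2*(t 4)) * h2 + (12 + -58*(t 4) + 96*(t 4)^2 + -50*(t 4)^3 + -32*(t 3) + 64*(t 3)*(t 4) + 8*(t 3)^2 + 7*(t 2) + -44*(t 2)*(t 4) + 25*(t 2)*(t 4)^2 + 56*(t 2)*(t 3) + -100*(t 2)*(t 3)*(t 4) + -15*(t 2)^2 + 75*(t 2)^2*(t 4) + -51*(t 1) + 128*(t 1)*(t 4) + -25*(t 1)*(t 4)^2 + 64*(t 1)*(t 3) + -100*(t 1)*(t 3)*(t 4) + 28*(t 1)*(t 2) + 35*(t 1)^2 + -75*(t 1)^2*(t 4)) * h3 + (-4 + 91*(t 4) + -57*(t 4)^2 + -50*(t 4)^3 + 44*(t 3) + -58*(t 3)*(t 4) + -50*(t 3)*(t 4)^2 + -56*(t 3)^2 + 100*(t 3)^2*(t 4) + -9*(t 2) + -22*(t 2)*(t 4) + -25*(t 2)*(t 4)^2 + -47*(t 2)*(t 3) + -25*(t 2)*(t 3)*(t 4) + 5*(t 2)^2 + -25*(t 2)^2*(t 4) + 17*(t 1) + -46*(t 1)*(t 4) + 25*(t 1)*(t 4)^2 + -13*(t 1)*(t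 3) + 25*(t 1)*(t 3)*(t 4) + 4*(t 1)*(t 2) + -25*(t 1)^2 + 25*(t 1)^2*(t 4)) * h4 + (16*(t 4) + -34*(t 4)^2 + 68*(t 4)^3 + -50*(t 4)^4 + 12*(t 3) + 6*(t 3)*(t 4) + -72*(t 3)*(t 4)^2 + 50*(t 3)*(t 4)^3 + -32*(t 3)^2 + 48*(t 3)^2*(t 4) + 8*(t 3)^3 + 8*(t 2) + 49*(t 2)*(t 4) + -118*(t 2)*(t 4)^2 + 25*(t 2)*(t 4)^3 + 19*(t 2)*(t 3) + -70*(t 2)*(t 3)*(t 4) + -25*(t 2)*(t 3)*(t 4)^2 + 8*(t 2)*(t 3)^2 + -2*(t 2)^2 + -86*(t 2)^2*(t 4) + 100*(t 2)^2*(t 4)^2 + -6*(t 2)^2*(t 3) + -50*(t 2)^2*(t 3)*(t 4) + -10*(t 2)^3 + 50*(t 2)^3*(t 4) + 4*(t 1) + 41*(t 1)*(t 4) + -64*(t 1)*(t 4)^2 + 75*(t 1)*(t 4)^3 + -55*(t 1)*(t 3) + 98*(t 1)*(t 3)*(t 4) + -75*(t 1)*(t 3)*(t 4)^2 + -45*(t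 1)*(t 2) + 33*(t 1)*(t 2)*(t 4) + 100*(t 1)*(t 2)*(t 4)^2 + 56*(t 1)*(t 2)*(t 3) + -100*(t 1)*(t 2)*(t 3)*(t 4) + 27*(t 1)*(t 2)^2 + 25*(t 1)*(t 2)^2*(t 4) + -37*(t 1)^2 + 21*(t 1)^2*(t 4) + 38*(t 1)^2*(t 3) + -50*(t 1)^2*(t 3)*(t 4) + 46*(t 1)^2*(t 2) + -50*(t 1)^2*(t 2)*(t 4) + 25*(t 1)^3 + -25*(t 1)^3*(t 4)) * hsum
  have hq : t 4 ^ 2 = t 4 := by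
    rcases mul_eq_zero.mp (by linarith : (t 4^2 - t 4) * (25*(t 4^2 - t 4) + 4) = 0) with h | h
    · linarith
    · exfalso
      set y := t 4 ^ 2 - t 4 with hy
      omega
  constructor
  · have g1 : 5 * (t 2 ^ 2) = 5 * (3 * t 4 ^ 2 + t 2 - 3 * t 4) := by
      linear_combination (1 + -3*(t 4) + 1*(t 3) + -3*(t 2)) * h1 + (-3 + -1*(t 4) + 2*(t 3) + -1*(t 2)) * h2 + (-2 + 1*(t 4) + 3*(t 3) + 1*(t 2) + 5*(t 1)) * h3 + (4 + -2*(t 4) + -1*(t 3) + -2*(t 2)) * h4 + (-1*(t 4) + -2*(t 4)^2 + -2*(t 3) + 3*(t 3)^2 + 2*(t 2) + -3*(t 2)*(t 4) + -2*(t 2)*(t 3) + -1*(t 2)^2 + 1*(t 1) + 2*(t 1)*(t 4) + 1*(t 1)*(t 3) + 2*(t 1)*(t 2)) * hsum + (-10) * hq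
    linarith
  · have g2 : 5 * (t 3 ^ 2) = 5 * (4 * t 2 ^ 2 + t 3 - 4 * t 2) := by
      linear_combination (-2 + 11*(t 4) + -5*(t 3) + 7*(t 2) + -3*(t 1)) * h1 + (11 + 7*(t 4) + -5*(t 3) + 4*(t 2) + -1*(t 1)) * h2 + (4 + -2*(t 4) + -10*(t 3) + -4*(t 2) + -19*(t 1)) * h3 + (-13 + 9*(t 4) + 5*(t 3) + 8*(t 2) + -2*(t 1)) * h4 + (2*(t 4) + 9*(t 4)^2 + 9*(t 3) + 3*(t 3)*(t 4) + -10*(t 3)^2 + -9*(t 2) + 10*(t 2)*(t 4) + 6*(t 2)*(t 3) + 4*(t 2)^2 + -2*(t 1) + -6*(t 1)*(t 4) + -4*(t 1)*(t 3) + -9*(t 1)*(t 2) + -3*(t 1)^2) * hsum + (-15) * hq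
    linarith
end

section
/- Let t_0, t_1, t_2, t_3, t_4 be integers satisfying the system: t_4³ = t_4², t_1² = t_1, t_1·t_2 + 3·t_4² − 3·t_4 = 0, t_2² − 3·t_4² − t_2 + 3·t_4 = 0, t_1·t_3 − t_1² + t_1 = 0, t_2·t_3 = 0, t_3² − 4·t_2² − t_3 + 4·t_2 = 0, t_1·t_4 + t_4² − t_4 = 0, t_2·t_4 = 0, t_3·t_4 = 0, 5·t_4² − 5·t_4 = 0, together with t_0 + t_1 + t_2 + t_3 + t_4 = 1. Then exactly one of t_0, t_1, t_2, t_3, t_4 equals 1 and all the others equal 0. -/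
/-- Any integer solution of the Gröbner-basis system for `ℤ[Q₅]` with coefficient
sum `1` is a standard unit vector. -/
theorem stmt_11 (t0 t1 t2 t3 t4 : ℤ)
    (h1 : t4 ^ 3 = t4 ^ 2)
    (h2 : t1 ^ 2 = t1)
    (h3 : t1 * t2 + 3 * t4 ^ 2 - 3 * t4 = 0)
    (h4 : t2 ^ 2 - 3 * t4 ^ 2 - t2 + 3 * t4 = 0)
    (h5 : t1 * t3 - t1 ^ 2 + t1 = 0)
    (h6 : t2 * t3 = 0)
    (h7 : t3 ^ 2 - 4 * t2 ^ 2 - t3 + 4 * t2 = 0)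
    (h8 : t1 * t4 + t4 ^ 2 - t4 = 0)
    (h9 : t2 * t4 = 0)
    (h10 : t3 * t4 = 0)
    (h11 : 5 * t4 ^ 2 - 5 * t4 = 0)
    (hsum : t0 + t1 + t2 + t3 + t4 = 1) :
    (t0 = 1 ∧ t1 = 0 ∧ t2 = 0 ∧ t3 = 0 ∧ t4 = 0) ∨
    (t0 = 0 ∧ t1 = 1 ∧ t2 = 0 ∧ t3 = 0 ∧ t4 = 0) ∨
    (t0 = 0 ∧ t1 = 0 ∧ t2 = 1 ∧ t3 = 0 ∧ t4 = 0) ∨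
    (t0 = 0 ∧ t1 = 0 ∧ t2 = 0 ∧ t3 = 1 ∧ t4 = 0) ∨
    (t0 = 0 ∧ t1 = 0 ∧ t2 = 0 ∧ t3 = 0 ∧ t4 = 1) := by
  have e4 : t4 = 0 ∨ t4 = 1 := by
    have h : (5 : ℤ) * (t4 * (t4 - 1)) = 0 := by linear_combination h11
    rcases mul_eq_zero.mp h with h | h
    · omega
    · rcases mul_eq_zero.mp h with h | h
      · left; exact h
      · right; omega
  have e1 : t1 = 0 ∨ t1 = 1 := by
    have h : t1 * (t1 - 1) = 0 := by linear_combination h2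
    rcases mul_eq_zero.mp h with h | h
    · left; exact h
    · right; omega
  have e2 : t2 = 0 ∨ t2 = 1 := by
    have h : t2 * (t2 - 1) = 0 := by
      rcases e4 with h | h <;> subst h <;> linear_combination h4
    rcases mul_eq_zero.mp h with h | h
    · left; exact h
    · right; omega
  have e3 : t3 = 0 ∨ t3 = 1 := by
    have h : t3 * (t3 - 1) = 0 := by
      rcases e2 with h | h <;> subst h <;> linear_combination h7
    rcases mul_eq_zero.mp h with h | h
    · left; exact h
    · right; omega
  rcases e1 with h | h <;> subst h <;>
    rcases e2 with h | h <;> subst h <;>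
    rcases e3 with h | h <;> subst h <;>
    rcases e4 with h | h <;> subst h <;>
    simp_all <;> omega
end
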